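/- arXiv:1808.01559 — 2 statements merged into one kernel-verified Lean document; each statement's English description precedes it below -/
import Mathlib

section
/- For real σ > 1, the series ∑_{n=1}^∞ ∑_{m=1}^∞ m^{−σ+n+2} ∫_m^∞ (t − ⌊t⌋) t^{−n−3} dt converges (all terms are nonnegative). -/
/-!
Bounding `Int.fract t` by `1` gives a term of size `m ^ (-σ) / n`, and bounding it by `t - m`
gives `m ^ (1 - σ) / n ^ 2`. Neither bound alone is summable over both indices when `σ ≤ 2`, but
the weighted geometric mean `(m ^ (-σ) / n) ^ (1 - ε) * (m ^ (1 - σ) / n ^ 2) ^ ε =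
n ^ (-1 - ε) * m ^ (ε - σ)` is, for any `0 < ε < σ - 1`.
-/

open MeasureTheory Set Real

lemma integrableOn_fract_mul_rpow_Ioi {s m : ℝ} (hs : s < -1) (hm : 0 < m) :
    IntegrableOn (fun t : ℝ => Int.fract t * t ^ s) (Ioi m) := by
  refine (integrableOn_Ioi_rpow_of_lt hs hm).mono' ?_ ?_
  · exact measurable_fract.aestronglyMeasurable.mul
      ((continuousOn_id.rpow_const fun _ hx => Or.inl (hm.trans hx).ne').aestronglyMeasurable
        measurableSet_Ioi)
  · filter_upwards [ae_restrict_mem measurableSet_Ioi] with t ht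
    have ht₀ : 0 ≤ t := (hm.trans ht).le
    rw [norm_of_nonneg (mul_nonneg (Int.fract_nonneg t) (rpow_nonneg ht₀ _))]
    exact mul_le_of_le_one_left (rpow_nonneg ht₀ _) (Int.fract_lt_one t).le

lemma setIntegral_fract_mul_rpow_nonneg (s : ℝ) {m : ℝ} (hm : 0 ≤ m) :
    0 ≤ ∫ t in Ioi m, Int.fract t * t ^ s :=
  setIntegral_nonneg measurableSet_Ioi fun t ht =>
    mul_nonneg (Int.fract_nonneg t) (rpow_nonneg (hm.trans ht.le) _)

lemma setIntegral_fract_mul_rpow_le {s m : ℝ} (hs : s < -1) (hm : 0 < m) :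
    ∫ t in Ioi m, Int.fract t * t ^ s ≤ -m ^ (s + 1) / (s + 1) := by
  rw [← integral_Ioi_rpow_of_lt hs hm]
  refine setIntegral_mono_on (integrableOn_fract_mul_rpow_Ioi hs hm)
    (integrableOn_Ioi_rpow_of_lt hs hm) measurableSet_Ioi fun t ht => ?_
  exact mul_le_of_le_one_left (rpow_nonneg (hm.trans ht).le _) (Int.fract_lt_one t).le

lemma fract_le_sub_natCast {t : ℝ} {M : ℕ} (ht : (M : ℝ) ≤ t) : Int.fract t ≤ t - M := by
  have hM : (M : ℤ) ≤ ⌊t⌋ := Int.le_floor.2 (by exact_mod_cast ht)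
  have hM' : (M : ℝ) ≤ ⌊t⌋ := by exact_mod_cast hM
  rw [Int.fract]
  linarith

lemma setIntegral_fract_mul_rpow_le_of_natCast {s : ℝ} (hs : s < -2) {M : ℕ} (hM : 0 < M) :
    ∫ t in Ioi (M : ℝ), Int.fract t * t ^ s ≤ (M : ℝ) ^ (s + 2) / ((s + 1) * (s + 2)) := by
  have hM' : (0 : ℝ) < M := by exact_mod_cast hM
  have hs₁ : s < -1 := by linarith
  have hs₂ : s + 1 < -1 := by linarith
  have hint := integrableOn_Ioi_rpow_of_lt hs₁ hM'
  have hint₁ := integrableOn_Ioi_rpow_of_lt hs₂ hM'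
  calc ∫ t in Ioi (M : ℝ), Int.fract t * t ^ s
      ≤ ∫ t in Ioi (M : ℝ), (t ^ (s + 1) - M * t ^ s) := by
        refine setIntegral_mono_on (integrableOn_fract_mul_rpow_Ioi hs₁ hM')
          (hint₁.sub (hint.const_mul _)) measurableSet_Ioi fun t ht => ?_
        have ht₀ : 0 < t := hM'.trans ht
        rw [rpow_add ht₀, rpow_one, mul_comm (t ^ s) t, ← sub_mul]
        exact mul_le_mul_of_nonneg_right (fract_le_sub_natCast ht.le) (rpow_nonneg ht₀.le _)
    _ = (M : ℝ) ^ (s + 2) / ((s + 1) * (s + 2)) := by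
        rw [integral_sub hint₁ (hint.const_mul _), integral_const_mul,
          integral_Ioi_rpow_of_lt hs₂ hM', integral_Ioi_rpow_of_lt hs₁ hM',
          show s + 1 + 1 = s + 2 by ring, show s + 2 = 1 + (s + 1) by ring, rpow_add hM',
          rpow_one]
        have : s + 1 ≠ 0 := by linarith
        have : 1 + (s + 1) ≠ 0 := by linarith
        field_simp
        ring

lemma le_rpow_mul_rpow_of_le_of_le {x a b θ : ℝ} (hx : 0 ≤ x) (ha : x ≤ a) (hb : x ≤ b)
    (hθ₀ : 0 ≤ θ) (hθ₁ : θ ≤ 1) : x ≤ a ^ (1 - θ) * b ^ θ := by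
  have : 0 ≤ 1 - θ := by linarith
  have : 0 ≤ a := hx.trans ha
  calc x = x ^ (1 - θ) * x ^ θ := by rw [← rpow_add' hx (by simp), sub_add_cancel, rpow_one]
    _ ≤ a ^ (1 - θ) * b ^ θ := by gcongr

noncomputable def fractTerm (σ : ℝ) (n m : ℕ) : ℝ :=
  (m : ℝ) ^ (-σ + n + 2) * ∫ t in Ioi (m : ℝ), Int.fract t * t ^ (-(n : ℝ) - 3)

lemma fractTerm_nonneg (σ : ℝ) (n m : ℕ) : 0 ≤ fractTerm σ n m :=
  mul_nonneg (rpow_nonneg m.cast_nonneg _) (setIntegral_fract_mul_rpow_nonneg _ m.cast_nonneg)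

section fractTerm

variable (σ : ℝ) {n m : ℕ}

lemma fractTerm_le_rpow_neg_one_mul (hn : 0 < n) (hm : 0 < m) :
    fractTerm σ n m ≤ (n : ℝ) ^ (-1 : ℝ) * (m : ℝ) ^ (-σ) := by
  have hm' : (0 : ℝ) < m := by exact_mod_cast hm
  calc fractTerm σ n m
      ≤ (m : ℝ) ^ (-σ + n + 2) * (-(m : ℝ) ^ (-(n : ℝ) - 3 + 1) / (-(n : ℝ) - 3 + 1)) :=
        mul_le_mul_of_nonneg_left (setIntegral_fract_mul_rpow_le (by linarith) hm')
          (rpow_nonneg hm'.le _)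
    _ = (m : ℝ) ^ (-σ) / (n + 2) := by
        rw [show -(n : ℝ) - 3 + 1 = -(n + 2) by ring, neg_div_neg_eq, ← mul_div_assoc,
          ← rpow_add hm']
        ring_nf
    _ ≤ (n : ℝ) ^ (-1 : ℝ) * (m : ℝ) ^ (-σ) := by
        rw [rpow_neg_one, div_eq_inv_mul]
        gcongr
        linarith

lemma fractTerm_le_rpow_neg_two_mul (hn : 0 < n) (hm : 0 < m) :
    fractTerm σ n m ≤ (n : ℝ) ^ (-2 : ℝ) * (m : ℝ) ^ (1 - σ) := by
  have hn' : (0 : ℝ) < n := by exact_mod_cast hn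
  have hm' : (0 : ℝ) < m := by exact_mod_cast hm
  calc fractTerm σ n m
      ≤ (m : ℝ) ^ (-σ + n + 2) *
          ((m : ℝ) ^ (-(n : ℝ) - 3 + 2) / ((-(n : ℝ) - 3 + 1) * (-(n : ℝ) - 3 + 2))) :=
        mul_le_mul_of_nonneg_left (setIntegral_fract_mul_rpow_le_of_natCast (by linarith) hm)
          (rpow_nonneg hm'.le _)
    _ = (m : ℝ) ^ (1 - σ) / ((n + 2) * (n + 1)) := by
        rw [← mul_div_assoc, ← rpow_add hm']
        ring_nf
    _ ≤ (n : ℝ) ^ (-2 : ℝ) * (m : ℝ) ^ (1 - σ) := by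
        rw [rpow_neg hn'.le, rpow_two, div_eq_inv_mul]
        gcongr
        linarith

lemma fractTerm_le_rpow_mul_rpow {ε : ℝ} (hε₀ : 0 ≤ ε) (hε₁ : ε ≤ 1) (hn : 0 < n) (hm : 0 < m) :
    fractTerm σ n m ≤ (n : ℝ) ^ (-1 - ε) * (m : ℝ) ^ (ε - σ) := by
  have hn' : (0 : ℝ) < n := by exact_mod_cast hn
  have hm' : (0 : ℝ) < m := by exact_mod_cast hm
  calc fractTerm σ n m
      ≤ ((n : ℝ) ^ (-1 : ℝ) * (m : ℝ) ^ (-σ)) ^ (1 - ε) *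
          ((n : ℝ) ^ (-2 : ℝ) * (m : ℝ) ^ (1 - σ)) ^ ε :=
        le_rpow_mul_rpow_of_le_of_le (fractTerm_nonneg σ n m)
          (fractTerm_le_rpow_neg_one_mul σ hn hm) (fractTerm_le_rpow_neg_two_mul σ hn hm) hε₀ hε₁
    _ = (n : ℝ) ^ (-1 - ε) * (m : ℝ) ^ (ε - σ) := by
        simp only [mul_rpow (rpow_nonneg hn'.le _) (rpow_nonneg hm'.le _), ← rpow_mul hn'.le,
          ← rpow_mul hm'.le]
        rw [mul_mul_mul_comm, ← rpow_add hn', ← rpow_add hm']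
        ring_nf

end fractTerm

theorem stmt5 (σ : ℝ) (hσ : 1 < σ) :
    Summable (fun p : ℕ+ × ℕ+ =>
      ((p.2 : ℕ) : ℝ) ^ (-σ + (p.1 : ℕ) + 2) *
        ∫ t in Set.Ioi (((p.2 : ℕ) : ℝ)), Int.fract t * t ^ (-((p.1 : ℕ) : ℝ) - 3)) := by
  obtain ⟨ε, hε₀, hε₁, hεσ⟩ : ∃ ε : ℝ, 0 < ε ∧ ε ≤ 1 ∧ ε < σ - 1 :=
    ⟨min ((σ - 1) / 2) 1, lt_min (by linarith) one_pos, min_le_right _ _,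
      (min_le_left _ _).trans_lt (by linarith)⟩
  have hsum_n : Summable fun n : ℕ+ => ((n : ℕ) : ℝ) ^ (-1 - ε) :=
    summable_pnat_iff_summable_nat.2 (summable_nat_rpow.2 (by linarith))
  have hsum_m : Summable fun m : ℕ+ => ((m : ℕ) : ℝ) ^ (ε - σ) :=
    summable_pnat_iff_summable_nat.2 (summable_nat_rpow.2 (by linarith))
  refine (hsum_n.mul_of_nonneg hsum_m (fun _ => by positivity) fun _ => by positivity)
    |>.of_nonneg_of_le (fun p => fractTerm_nonneg σ p.1 p.2) fun p => ?_
  exact fractTerm_le_rpow_mul_rpow σ hε₀.le hε₁ p.1.pos p.2.pos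
end

section
/- For positive integers D < m and d ≥ 0, the identity ∑_{t=D+1}^{m-1} (1/(t^{s−d−2} m (m−t))) S_d(m−t, m) − ∑_{t=D+1}^{m-1} (1/(m^{s−d−1}(m−t))) S_d(m−t, m) summed over all m > D equals F_{d+1}(D,s) for Re(s) large, where S_d(a,b) = ∑_{a ≤ x₁ ≤ ⋯ ≤ x_d ≤ b} 1/(x₁⋯x_d) and F_{d+1}(D,s) = ∑_{N>D} (1/N^{s−d−1}) S_{d+1}(N−D, N). -/
open Complex

/-- `Schain d a b = ∑_{a ≤ x₁ ≤ ⋯ ≤ x_d ≤ b} 1/(x₁⋯x_d)` over positive integers. -/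
noncomputable def Schain (d a b : ℕ) : ℂ :=
  ∑' x : {x : Fin d → ℕ // Monotone x ∧ ∀ i, a ≤ x i ∧ x i ≤ b},
    ∏ i, (1 : ℂ) / ((x.1 i : ℂ))

/-!
Since `1/(t m (m - t)) = (1/t) (1/(m - t) - 1/m)`, the first sum is a double series over
`D < t < m`. It converges absolutely for `Re s > 2d + 3`, so the order of summation can be
exchanged, and the inner series `∑_{m > t} (1/(m - t) - 1/m) S_d(m - t, m)` telescopes to
`S_{d+1}(1, t)`: splitting off the smallest, resp. largest, entry of a chain gives
`S_{d+1}(k, k + t) = S_d(k, k + t)/k + S_{d+1}(k + 1, k + t)`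
`                  = S_{d+1}(k, k + t - 1) + S_d(k, k + t)/(k + t)`.
The second sum telescopes in the same way to `N^{-(s-d-1)} (S_{d+1}(1, N) - S_{d+1}(N - D, N))`,
and the difference of the two series is `F_{d+1}(D, s)`.
-/

open Finset Filter Topology

open Classical in
noncomputable def chains (d a b : ℕ) : Finset (Fin d → ℕ) :=
  {x ∈ Fintype.piFinset fun _ => Icc a b | Monotone x}

section Chains

variable {d a b : ℕ}

lemma mem_chains {x : Fin d → ℕ} :
    x ∈ chains d a b ↔ Monotone x ∧ ∀ i, a ≤ x i ∧ x i ≤ b := by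
  simp [chains, and_comm]

lemma schain_eq_sum_chains (d a b : ℕ) :
    Schain d a b = ∑ x ∈ chains d a b, ∏ i, (1 : ℂ) / (x i : ℂ) := by
  rw [Schain, ← Finset.tsum_subtype]
  exact (Equiv.subtypeEquivRight fun _ => mem_chains.symm).tsum_eq
    (fun x : chains d a b => ∏ i, (1 : ℂ) / (x.1 i : ℂ))

lemma card_chains_le (d a b : ℕ) : #(chains d a b) ≤ (b + 1 - a) ^ d := by
  classical
  calc #(chains d a b) ≤ #(Fintype.piFinset fun _ : Fin d => Icc a b) := card_filter_le _ _
    _ = (b + 1 - a) ^ d := by simp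

lemma norm_schain_le (ha : 0 < a) :
    ‖Schain d a b‖ ≤ ((b + 1 - a : ℕ) : ℝ) ^ d / (a : ℝ) ^ d := by
  have hterm : ∀ x ∈ chains d a b,
      ‖∏ i, (1 : ℂ) / (x i : ℂ)‖ ≤ (1 / (a : ℝ)) ^ d := by
    intro x hx
    have hle : ∀ i ∈ univ, ‖(1 : ℂ) / (x i : ℂ)‖ ≤ 1 / (a : ℝ) := fun i _ => by
      rw [norm_div, norm_one, Complex.norm_natCast]
      exact one_div_le_one_div_of_le (by exact_mod_cast ha)
        (by exact_mod_cast ((mem_chains.1 hx).2 i).1)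
    calc ‖∏ i, (1 : ℂ) / (x i : ℂ)‖ = ∏ i, ‖(1 : ℂ) / (x i : ℂ)‖ := norm_prod _ _
      _ ≤ ∏ _i : Fin d, 1 / (a : ℝ) := prod_le_prod (fun _ _ => norm_nonneg _) hle
      _ = (1 / (a : ℝ)) ^ d := by simp
  rw [schain_eq_sum_chains]
  calc _ ≤ ∑ x ∈ chains d a b, ‖∏ i, (1 : ℂ) / (x i : ℂ)‖ := norm_sum_le _ _
    _ ≤ #(chains d a b) * (1 / (a : ℝ)) ^ d := by
      simpa using Finset.sum_le_sum hterm
    _ ≤ _ := by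
      rw [div_eq_mul_one_div _ ((a : ℝ) ^ d), ← one_div_pow]
      gcongr
      exact_mod_cast card_chains_le d a b

lemma norm_schain_le_pow (ha : 0 < a) : ‖Schain d a b‖ ≤ (b : ℝ) ^ d := by
  refine (norm_schain_le ha).trans ?_
  rw [div_le_iff₀ (by positivity)]
  calc ((b + 1 - a : ℕ) : ℝ) ^ d ≤ (b : ℝ) ^ d * 1 ^ d := by
        rw [one_pow, mul_one]; gcongr; omega
    _ ≤ (b : ℝ) ^ d * (a : ℝ) ^ d := by gcongr; exact_mod_cast ha

lemma monotone_cons {α : Type*} [Preorder α] {x : α} {y : Fin d → α} (hy : Monotone y)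
    (h : ∀ i, x ≤ y i) : Monotone (Fin.cons x y : Fin (d + 1) → α) := by
  intro i j hij
  cases i using Fin.cases with
  | zero => cases j using Fin.cases with
    | zero => exact le_rfl
    | succ j => simpa using h j
  | succ i => cases j using Fin.cases with
    | zero => exact absurd hij (by simp)
    | succ j => simpa using hy (Fin.succ_le_succ_iff.mp hij)

lemma monotone_snoc {α : Type*} [Preorder α] {x : α} {y : Fin d → α} (hy : Monotone y)
    (h : ∀ i, y i ≤ x) : Monotone (Fin.snoc y x : Fin (d + 1) → α) := by
  intro i j hij
  cases j using Fin.lastCases with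
  | last => cases i using Fin.lastCases with
    | last => exact le_rfl
    | cast i => simpa using h i
  | cast j => cases i using Fin.lastCases with
    | last => exact absurd hij (by simp)
    | cast i => simpa using hy (Fin.castSucc_le_castSucc_iff.mp hij)

/-- Split a chain according to whether its smallest entry is `a`. -/
lemma schain_succ_left (hab : a ≤ b) :
    Schain (d + 1) a b = 1 / (a : ℂ) * Schain d a b + Schain (d + 1) (a + 1) b := by
  classical
  rw [schain_eq_sum_chains, schain_eq_sum_chains, schain_eq_sum_chains,
    ← sum_filter_add_sum_filter_not (chains (d + 1) a b) (fun x => x 0 = a), mul_sum]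
  congr 1
  · refine sum_nbij' Fin.tail (fun y => Fin.cons a y) ?_ ?_ ?_ ?_ ?_
    · simp only [mem_filter, mem_chains, and_imp]
      exact fun x hmono hbd _ =>
        ⟨hmono.comp fun i j => Fin.succ_le_succ_iff.mpr, fun i => hbd i.succ⟩
    · simp only [mem_filter, mem_chains, and_imp]
      intro y hmono hbd
      refine ⟨⟨monotone_cons hmono fun i => (hbd i).1, fun i => ?_⟩, rfl⟩
      cases i using Fin.cases with
      | zero => simpa using hab
      | succ i => simpa using hbd i
    · intro x hx
      simpa [(mem_filter.1 hx).2] using Fin.cons_self_tail x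
    · intro y _
      exact Fin.tail_cons _ _
    · intro x hx
      rw [Fin.prod_univ_succ, (mem_filter.1 hx).2]
      rfl
  · congr 1
    ext x
    simp only [mem_filter, mem_chains]
    constructor
    · rintro ⟨⟨hmono, hbd⟩, hx0⟩
      exact ⟨hmono, fun i =>
        ⟨by have := hmono (Fin.zero_le i); have := (hbd 0).1; omega, (hbd i).2⟩⟩
    · rintro ⟨hmono, hbd⟩
      exact ⟨⟨hmono, fun i => ⟨by have := (hbd i).1; omega, (hbd i).2⟩⟩,
        by have := (hbd 0).1; omega⟩

/-- Split a chain according to whether its largest entry is `b + 1`. -/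
lemma schain_succ_right (hab : a ≤ b + 1) :
    Schain (d + 1) a (b + 1) =
      Schain (d + 1) a b + 1 / ((b + 1 : ℕ) : ℂ) * Schain d a (b + 1) := by
  classical
  rw [schain_eq_sum_chains, schain_eq_sum_chains, schain_eq_sum_chains,
    ← sum_filter_not_add_sum_filter (chains (d + 1) a (b + 1)) (fun x => x (Fin.last d) = b + 1),
    mul_sum]
  congr 1
  · congr 1
    ext x
    simp only [mem_filter, mem_chains]
    constructor
    · rintro ⟨⟨hmono, hbd⟩, hxl⟩
      exact ⟨hmono, fun i => ⟨(hbd i).1,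
        by have := hmono (Fin.le_last i); have := (hbd (Fin.last d)).2; omega⟩⟩
    · rintro ⟨hmono, hbd⟩
      exact ⟨⟨hmono, fun i => ⟨(hbd i).1, by have := (hbd i).2; omega⟩⟩,
        by have := (hbd (Fin.last d)).2; omega⟩
  · refine sum_nbij' Fin.init (Fin.snoc · (b + 1)) ?_ ?_ ?_ ?_ ?_
    · simp only [mem_filter, mem_chains, and_imp]
      exact fun x hmono hbd _ =>
        ⟨hmono.comp fun i j => Fin.castSucc_le_castSucc_iff.mpr, fun i => hbd i.castSucc⟩
    · simp only [mem_filter, mem_chains, and_imp]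
      intro y hmono hbd
      refine ⟨⟨monotone_snoc hmono fun i => (hbd i).2, fun i => ?_⟩, by simp⟩
      cases i using Fin.lastCases with
      | last => simpa using hab
      | cast i => simpa using hbd i
    · intro x hx
      simpa [(mem_filter.1 hx).2] using Fin.snoc_init_self x
    · intro y _
      exact Fin.init_snoc _ _
    · intro x hx
      rw [Fin.prod_univ_castSucc, (mem_filter.1 hx).2, mul_comm]
      rfl

end Chains

section Telescoping

variable {d : ℕ}

lemma sum_Ico_one_div_mul_schain {i j b : ℕ} (hij : i ≤ j) (hjb : j ≤ b + 1) :
    ∑ a ∈ Ico i j, 1 / (a : ℂ) * Schain d a b = Schain (d + 1) i b - Schain (d + 1) j b := by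
  induction j, hij using Nat.le_induction with
  | base => simp
  | succ j hij ih =>
    rw [sum_Ico_succ_top hij, ih (by omega), schain_succ_left (a := j) (by omega)]
    ring

lemma sum_Ioo_one_div_mul_schain {D N : ℕ} (hDN : D < N) :
    ∑ t ∈ Ioo D N, 1 / ((N - t : ℕ) : ℂ) * Schain d (N - t) N =
      Schain (d + 1) 1 N - Schain (d + 1) (N - D) N := by
  have hIoo : Ioo D N = Ico (D + 1) N := by ext; simp only [mem_Ioo, mem_Ico]; omega
  rw [hIoo, sum_Ico_reflect (fun a => 1 / (a : ℂ) * Schain d a N) _ (Nat.le_succ N),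
    Nat.add_sub_cancel_left, Nat.add_sub_add_right]
  exact sum_Ico_one_div_mul_schain (by omega) (by omega)

/-- `1/(m - t) - 1/m` is the partial-fraction form of the weight `t/(m (m - t))` of the
first sum. -/
noncomputable def chainGap (d t m : ℕ) : ℂ :=
  (1 / ((m - t : ℕ) : ℂ) - 1 / (m : ℂ)) * Schain d (m - t) m

lemma chainGap_add_eq_sub (d t k : ℕ) :
    chainGap d t (t + k + 1) =
      Schain (d + 1) (k + 1) (t + k) - Schain (d + 1) (k + 2) (t + k + 1) := by
  have hmin := schain_succ_left (d := d) (show k + 1 ≤ t + k + 1 by omega)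
  have hmax := schain_succ_right (d := d) (show k + 1 ≤ t + k + 1 by omega)
  rw [chainGap, show t + k + 1 - t = k + 1 by omega]
  linear_combination hmax - hmin

lemma norm_chainGap_add_le (d t k : ℕ) :
    ‖chainGap d t (t + k + 1)‖ ≤ t * (t + 1) ^ d / (k + 1) ^ 2 := by
  have hweight : 1 / ((k + 1 : ℕ) : ℂ) - 1 / ((t + k + 1 : ℕ) : ℂ) =
      ((t / ((k + 1) * (t + k + 1)) : ℝ) : ℂ) := by
    have hk : (k : ℂ) + 1 ≠ 0 := Nat.cast_add_one_ne_zero k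
    have htk : (t : ℂ) + k + 1 ≠ 0 := by exact_mod_cast Nat.succ_ne_zero (t + k)
    push_cast
    field_simp
    ring
  have hS : ‖Schain d (k + 1) (t + k + 1)‖ ≤ ((t : ℝ) + 1) ^ d := by
    refine (norm_schain_le (by omega)).trans ?_
    rw [show t + k + 1 + 1 - (k + 1) = t + 1 by omega]
    push_cast
    exact div_le_self (by positivity) (one_le_pow₀ (by linarith [k.cast_nonneg (α := ℝ)]))
  rw [chainGap, show t + k + 1 - t = k + 1 by omega, hweight, norm_mul, Complex.norm_real,
    Real.norm_of_nonneg (by positivity)]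
  calc (t : ℝ) / ((k + 1) * (t + k + 1)) * ‖Schain d (k + 1) (t + k + 1)‖
      ≤ t / ((k + 1) * (k + 1)) * ((t : ℝ) + 1) ^ d := by
        gcongr
        linarith [t.cast_nonneg (α := ℝ)]
    _ = t * (t + 1) ^ d / (k + 1) ^ 2 := by ring

lemma summable_one_div_add_one_sq : Summable fun k : ℕ => 1 / ((k : ℝ) + 1) ^ 2 := by
  simpa using (summable_nat_add_iff 1).mpr (Real.summable_one_div_nat_pow.mpr one_lt_two)

lemma summable_chainGap_add (d t : ℕ) : Summable fun k => chainGap d t (t + k + 1) :=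
  .of_norm_bounded (summable_one_div_add_one_sq.mul_left ((t : ℝ) * (t + 1) ^ d)) fun k =>
    (norm_chainGap_add_le d t k).trans_eq (by ring)

lemma tendsto_schain_add_one_add (d t : ℕ) :
    Tendsto (fun n => Schain (d + 1) (n + 1) (t + n)) atTop (𝓝 0) := by
  have hlim : Tendsto (fun n : ℕ => (t : ℝ) ^ (d + 1) * (1 / (n + 1 : ℝ))) atTop (𝓝 0) := by
    simpa using tendsto_one_div_add_atTop_nhds_zero_nat.const_mul ((t : ℝ) ^ (d + 1))
  refine squeeze_zero_norm (fun n => ?_) hlim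
  refine (norm_schain_le (by omega)).trans ?_
  rw [show t + n + 1 - (n + 1) = t by omega, div_eq_mul_one_div]
  push_cast
  gcongr
  exact le_self_pow₀ (by linarith [n.cast_nonneg (α := ℝ)]) (by omega)

lemma hasSum_chainGap_add (d t : ℕ) :
    HasSum (fun k => chainGap d t (t + k + 1)) (Schain (d + 1) 1 t) := by
  rw [(summable_chainGap_add d t).hasSum_iff_tendsto_nat]
  have hpartial : ∀ n, ∑ k ∈ range n, chainGap d t (t + k + 1) =
      Schain (d + 1) 1 t - Schain (d + 1) (n + 1) (t + n) := fun n => by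
    refine (sum_congr rfl fun k _ => ?_).trans
      (sum_range_sub' (fun k => Schain (d + 1) (k + 1) (t + k)) n)
    rw [chainGap_add_eq_sub, add_assoc t k 1]
  simpa [hpartial] using (tendsto_schain_add_one_add d t).const_sub (Schain (d + 1) 1 t)

end Telescoping

lemma hasSum_sum_Ioo_mul_chainGap {d D : ℕ} {w : ℕ → ℂ}
    (hw : Summable fun t : {t // D < t} => ‖w t‖ * (t * (t + 1) ^ d)) :
    HasSum (fun m => ∑ t ∈ Ioo D m, w t * chainGap d t m)
      (∑' t : {t // D < t}, w t * Schain (d + 1) 1 t) := by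
  classical
  let f : ℕ × ℕ → ℂ := fun p =>
    if D < p.2 ∧ p.2 < p.1 then w p.2 * chainGap d p.2 p.1 else 0
  -- `g` parametrizes the support `D < t < m` of `f` by `t` and the gap `k = m - t - 1`.
  let g : {t // D < t} × ℕ → ℕ × ℕ := fun q => (q.1 + q.2 + 1, q.1)
  have hg : g.Injective := by
    rintro ⟨⟨t, ht⟩, k⟩ ⟨⟨t', ht'⟩, k'⟩ h
    simp only [g, Prod.mk.injEq] at h
    obtain ⟨h1, rfl⟩ := h
    obtain rfl : k = k' := by omega
    rfl
  have hf : ∀ p ∉ Set.range g, f p = 0 := by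
    rintro ⟨m, t⟩ hp
    refine if_neg fun ⟨hDt, htm⟩ => hp ⟨(⟨t, hDt⟩, m - t - 1), ?_⟩
    show (t + (m - t - 1) + 1, t) = (m, t)
    rw [show t + (m - t - 1) + 1 = m by omega]
  have hfg : f ∘ g = fun q => w q.1 * chainGap d q.1 (q.1 + q.2 + 1) := by
    ext ⟨⟨t, ht⟩, k⟩
    exact if_pos (show D < t ∧ t < t + k + 1 from ⟨ht, by omega⟩)
  have hsummable : Summable (f ∘ g) := by
    rw [hfg]
    refine .of_norm_bounded (hw.mul_of_nonneg summable_one_div_add_one_sq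
      (fun _ => by positivity) fun _ => by positivity) fun q => ?_
    rw [norm_mul]
    refine (mul_le_mul_of_nonneg_left (norm_chainGap_add_le d q.1 q.2) (norm_nonneg _)).trans_eq ?_
    ring
  have hrows (t : {t // D < t}) :
      HasSum (fun k => (f ∘ g) (t, k)) (w t * Schain (d + 1) 1 t) := by
    rw [hfg]
    exact (hasSum_chainGap_add d t).mul_left (w t)
  have hsum : HasSum f (∑' t : {t // D < t}, w t * Schain (d + 1) 1 t) := by
    rw [← hg.hasSum_iff hf, (hsummable.hasSum.prod_fiberwise hrows).tsum_eq]
    exact hsummable.hasSum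
  refine hsum.prod_fiberwise fun m => ?_
  rw [← sum_congr rfl fun t ht => (if_pos (mem_Ioo.1 ht) : f (m, t) = _)]
  exact hasSum_sum_of_ne_finset_zero fun t ht => if_neg fun h => ht (mem_Ioo.2 h)

section Dirichlet

variable {d : ℕ} {s : ℂ}

lemma summable_norm_one_div_cpow_mul_pow (hs : 2 * d + 3 < s.re) :
    Summable fun n : ℕ => ‖1 / (n : ℂ) ^ (s - d - 1)‖ * (n : ℝ) ^ (d + 1) := by
  have hre : (s - d - 1).re ≠ 0 := by simp; linarith
  have hexp : -(s - d - 1).re + (d + 1 : ℕ) < -1 := by simp; linarith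
  refine (Real.summable_nat_rpow.2 hexp).congr fun n => ?_
  rw [norm_div, norm_one, norm_natCast_cpow_of_re_ne_zero n hre, ← Real.rpow_natCast, one_div,
    ← Real.rpow_neg n.cast_nonneg, ← Real.rpow_add' n.cast_nonneg (by simp; linarith)]

lemma summable_one_div_cpow_mul_schain (hs : 2 * d + 3 < s.re) {D : ℕ} {a : ℕ → ℕ}
    (ha : ∀ n, D < n → 0 < a n) :
    Summable fun n : {n // D < n} => 1 / (n : ℂ) ^ (s - d - 1) * Schain (d + 1) (a n) n :=
  .of_norm_bounded ((summable_norm_one_div_cpow_mul_pow hs).subtype _) fun n => by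
    rw [norm_mul]
    exact mul_le_mul_of_nonneg_left (norm_schain_le_pow (ha n n.2)) (norm_nonneg _)

lemma one_div_cpow_sub_one_mul_mul {t m : ℕ} (ht : 0 < t) (htm : t < m) (z : ℂ) :
    1 / ((t : ℂ) ^ (z - 1) * m * ((m - t : ℕ) : ℂ)) =
      1 / (t : ℂ) ^ z * (1 / ((m - t : ℕ) : ℂ) - 1 / m) := by
  have ht0 : (t : ℂ) ≠ 0 := by exact_mod_cast ht.ne'
  have hm0 : (m : ℂ) ≠ 0 := by exact_mod_cast (ht.trans htm).ne'
  have hmt : (m : ℂ) - t ≠ 0 := sub_ne_zero.2 (by exact_mod_cast htm.ne')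
  have htz : (t : ℂ) ^ z ≠ 0 := by simp [Complex.cpow_eq_zero_iff, ht0]
  rw [Complex.cpow_sub _ _ ht0, Complex.cpow_one, Nat.cast_sub htm.le]
  field_simp
  ring

lemma hasSum_sum_Ioo_one_div_cpow_mul_schain (hs : 2 * d + 3 < s.re) (D : ℕ) :
    HasSum (fun m : {m // D < m} => ∑ t ∈ Ioo D (m : ℕ),
        1 / ((t : ℂ) ^ (s - d - 2) * ((m : ℕ) : ℂ) * (((m : ℕ) - t : ℕ) : ℂ)) *
          Schain d (m - t) m)
      (∑' t : {t // D < t}, 1 / (t : ℂ) ^ (s - d - 1) * Schain (d + 1) 1 t) := by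
  have hw :
      Summable fun t : {t // D < t} => ‖1 / (t : ℂ) ^ (s - d - 1)‖ * (t * (t + 1) ^ d) := by
    refine .of_nonneg_of_le (fun _ => by positivity) (fun t => ?_)
      (((summable_norm_one_div_cpow_mul_pow hs).mul_left (2 ^ d)).subtype {t | D < t})
    have ht : (1 : ℝ) ≤ t := by exact_mod_cast Nat.one_le_of_lt t.2
    have : (t : ℝ) * (t + 1) ^ d ≤ 2 ^ d * (t : ℝ) ^ (d + 1) := by
      calc (t : ℝ) * (t + 1) ^ d ≤ t * (2 * t) ^ d := by gcongr; linarith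
        _ = 2 ^ d * (t : ℝ) ^ (d + 1) := by ring
    calc _ ≤ ‖1 / (t : ℂ) ^ (s - d - 1)‖ * (2 ^ d * (t : ℝ) ^ (d + 1)) := by gcongr
      _ = _ := by simp only [Function.comp_apply]; ring
  have hsupp : Function.support
      (fun m => ∑ t ∈ Ioo D m, 1 / (t : ℂ) ^ (s - d - 1) * chainGap d t m) ⊆ {m | D < m} :=
    Function.support_subset_iff'.2 fun m hm => by rw [Ioo_eq_empty hm, sum_empty]
  refine ((hasSum_subtype_iff_of_support_subset hsupp).2 (hasSum_sum_Ioo_mul_chainGap hw)).congr_fun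
    fun m => sum_congr rfl fun t ht => ?_
  rw [mem_Ioo] at ht
  rw [show s - d - 2 = s - d - 1 - 1 by ring, one_div_cpow_sub_one_mul_mul (by omega) ht.2,
    chainGap, mul_assoc]

end Dirichlet

theorem stmt10 (d D : ℕ) : ∃ R : ℝ, ∀ s : ℂ, R < s.re →
    ∑' m : {m : ℕ // D < m},
      ((∑ t ∈ Finset.Ioo D (m : ℕ),
          1 / ((t : ℂ) ^ (s - d - 2) * ((m : ℕ) : ℂ) * ((((m : ℕ) - t : ℕ)) : ℂ)) *
            Schain d ((m : ℕ) - t) m) -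
        ∑ t ∈ Finset.Ioo D (m : ℕ),
          1 / ((((m : ℕ) : ℂ)) ^ (s - d - 1) * ((((m : ℕ) - t : ℕ)) : ℂ)) *
            Schain d ((m : ℕ) - t) m) =
    ∑' N : {N : ℕ // D < N},
      1 / (((N : ℕ) : ℂ) ^ (s - d - 1)) * Schain (d + 1) ((N : ℕ) - D) N := by
  refine ⟨2 * d + 3, fun s hs => ?_⟩
  have hB (m : {m : ℕ // D < m}) : ∑ t ∈ Ioo D (m : ℕ),
      1 / (((m : ℕ) : ℂ) ^ (s - d - 1) * (((m : ℕ) - t : ℕ) : ℂ)) * Schain d (m - t) m =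
        1 / ((m : ℕ) : ℂ) ^ (s - d - 1) * Schain (d + 1) 1 m -
          1 / ((m : ℕ) : ℂ) ^ (s - d - 1) * Schain (d + 1) (m - D) m := by
    rw [← mul_sub, ← sum_Ioo_one_div_mul_schain m.2, mul_sum]
    exact sum_congr rfl fun t _ => by rw [← one_div_mul_one_div, mul_assoc]
  have hA := hasSum_sum_Ioo_one_div_cpow_mul_schain hs D
  have h₁ := summable_one_div_cpow_mul_schain hs (D := D) (a := fun _ => 1) fun _ _ => one_pos
  have h₂ := summable_one_div_cpow_mul_schain hs (D := D) (a := (· - D)) fun _ => Nat.sub_pos_of_lt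
  simp_rw [hB]
  exact (hA.sub (h₁.hasSum.sub h₂.hasSum)).tsum_eq.trans (sub_sub_cancel _ _)
end
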